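/- Let Λ, φ be C² solutions of the PCF system with compactly supported (in x) derivatives, uniformly in t on compact time intervals. Then the energy E(t) = ∫_ℝ [½((∂ₜΛ)² + (∂ₓΛ)²) + 2 sinh²(Λ)((∂ₜφ)² + (∂ₓφ)²)](t,x) dx is constant in t, i.e. dE/dt = 0. -/

import Mathlib

open MeasureTheory

noncomputable def dt (f : ℝ → ℝ → ℝ) : ℝ → ℝ → ℝ := fun t x => deriv (fun s => f s x) t
noncomputable def dx (f : ℝ → ℝ → ℝ) : ℝ → ℝ → ℝ := fun t x => deriv (fun y => f t y) x

noncomputable def enDensity (Λ φ : ℝ → ℝ → ℝ) : ℝ → ℝ → ℝ :=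
  fun t x => (1 / 2) * ((dt Λ t x) ^ 2 + (dx Λ t x) ^ 2)
    + 2 * (Real.sinh (Λ t x)) ^ 2 * ((dt φ t x) ^ 2 + (dx φ t x) ^ 2)

/-!
Differentiating the energy density `e` and substituting the two field equations (together with
the symmetry of mixed partials) gives the local conservation law `∂ₜe = ∂ₓp` for the momentum
density `p = ∂ₜΛ ∂ₓΛ + 4 sinh²Λ ∂ₜφ ∂ₓφ`. Near a time `t` both densities vanish for `|x| ≥ R`, so
`dE/dt = ∫_{-R}^{R} ∂ₜe dx = p(t, R) - p(t, -R) = 0`, where differentiation under the integral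
sign is justified by the boundedness of `∂ₜe` on a compact rectangle.
-/

open Function Set Filter Topology

section PartialDerivatives

variable {f : ℝ → ℝ → ℝ}

theorem hasDerivAt_dt_fderiv {t x : ℝ} (hf : DifferentiableAt ℝ (uncurry f) (t, x)) :
    HasDerivAt (fun s => f s x) (fderiv ℝ (uncurry f) (t, x) (1, 0)) t := by
  exact hf.hasFDerivAt.comp_hasDerivAt t ((hasDerivAt_id t).prodMk (hasDerivAt_const t x))

theorem hasDerivAt_dx_fderiv {t x : ℝ} (hf : DifferentiableAt ℝ (uncurry f) (t, x)) :
    HasDerivAt (fun y => f t y) (fderiv ℝ (uncurry f) (t, x) (0, 1)) x := by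
  exact hf.hasFDerivAt.comp_hasDerivAt x ((hasDerivAt_const x t).prodMk (hasDerivAt_id x))

theorem hasDerivAt_dt {t x : ℝ} (hf : DifferentiableAt ℝ (uncurry f) (t, x)) :
    HasDerivAt (fun s => f s x) (dt f t x) t :=
  (hasDerivAt_dt_fderiv hf).differentiableAt.hasDerivAt

theorem hasDerivAt_dx {t x : ℝ} (hf : DifferentiableAt ℝ (uncurry f) (t, x)) :
    HasDerivAt (fun y => f t y) (dx f t x) x :=
  (hasDerivAt_dx_fderiv hf).differentiableAt.hasDerivAt

theorem uncurry_dt_eq_fderiv (hf : Differentiable ℝ (uncurry f)) :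
    uncurry (dt f) = fun p => fderiv ℝ (uncurry f) p (1, 0) :=
  funext fun p => (hasDerivAt_dt_fderiv (hf p)).deriv

theorem uncurry_dx_eq_fderiv (hf : Differentiable ℝ (uncurry f)) :
    uncurry (dx f) = fun p => fderiv ℝ (uncurry f) p (0, 1) :=
  funext fun p => (hasDerivAt_dx_fderiv (hf p)).deriv

variable {m n : WithTop ℕ∞}

theorem ContDiff.uncurry_dt (hf : ContDiff ℝ n (uncurry f)) (hmn : m + 1 ≤ n) :
    ContDiff ℝ m (uncurry (dt f)) := by
  rw [uncurry_dt_eq_fderiv ((hf.of_le (le_add_self.trans hmn)).differentiable one_ne_zero)]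
  exact (hf.fderiv_right hmn).clm_apply contDiff_const

theorem ContDiff.uncurry_dx (hf : ContDiff ℝ n (uncurry f)) (hmn : m + 1 ≤ n) :
    ContDiff ℝ m (uncurry (dx f)) := by
  rw [uncurry_dx_eq_fderiv ((hf.of_le (le_add_self.trans hmn)).differentiable one_ne_zero)]
  exact (hf.fderiv_right hmn).clm_apply contDiff_const

theorem dx_dt_eq_dt_dx (hf : ContDiff ℝ 2 (uncurry f)) (t x : ℝ) :
    dx (dt f) t x = dt (dx f) t x := by
  have hDf : ContDiff ℝ 1 (fderiv ℝ (uncurry f)) := hf.fderiv_right (by norm_num)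
  have hD : HasFDerivAt (fderiv ℝ (uncurry f)) (fderiv ℝ (fderiv ℝ (uncurry f)) (t, x)) (t, x) :=
    (hDf.differentiable one_ne_zero _).hasFDerivAt
  have hd := hf.differentiable two_ne_zero
  have h₁ : dx (dt f) t x = fderiv ℝ (fderiv ℝ (uncurry f)) (t, x) (0, 1) (1, 0) := by
    have e : (fun y => dt f t y) = fun y => fderiv ℝ (uncurry f) (t, y) (1, 0) :=
      funext fun y => (hasDerivAt_dt_fderiv (hd _)).deriv
    unfold dx
    rw [e]
    have hpath : HasDerivAt (fun y : ℝ => (t, y)) ((0 : ℝ), (1 : ℝ)) x :=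
      (hasDerivAt_const x t).prodMk (hasDerivAt_id x)
    have hc : HasDerivAt (fun y => fderiv ℝ (uncurry f) (t, y))
        (fderiv ℝ (fderiv ℝ (uncurry f)) (t, x) (0, 1)) x := hD.comp_hasDerivAt x hpath
    simpa using (hc.clm_apply (hasDerivAt_const x ((1 : ℝ), (0 : ℝ)))).deriv
  have h₂ : dt (dx f) t x = fderiv ℝ (fderiv ℝ (uncurry f)) (t, x) (1, 0) (0, 1) := by
    have e : (fun s => dx f s x) = fun s => fderiv ℝ (uncurry f) (s, x) (0, 1) :=
      funext fun s => (hasDerivAt_dx_fderiv (hd _)).deriv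
    unfold dt
    rw [e]
    have hpath : HasDerivAt (fun s : ℝ => (s, x)) ((1 : ℝ), (0 : ℝ)) t :=
      (hasDerivAt_id t).prodMk (hasDerivAt_const t x)
    have hc : HasDerivAt (fun s => fderiv ℝ (uncurry f) (s, x))
        (fderiv ℝ (fderiv ℝ (uncurry f)) (t, x) (1, 0)) t := hD.comp_hasDerivAt t hpath
    simpa using (hc.clm_apply (hasDerivAt_const t ((0 : ℝ), (1 : ℝ)))).deriv
  rw [h₁, h₂]
  exact hf.contDiffAt.isSymmSndFDerivAt (by simp [minSmoothness_of_isRCLikeNormedField]) _ _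

end PartialDerivatives

theorem hasDerivAt_intervalIntegral_of_contDiff {F : ℝ → ℝ → ℝ} (hF : ContDiff ℝ 1 (uncurry F))
    (a b t : ℝ) :
    HasDerivAt (fun s => ∫ x in a..b, F s x) (∫ x in a..b, dt F t x) t := by
  have hF' : Continuous (uncurry (dt F)) := (hF.uncurry_dt (m := 0) le_rfl).continuous
  obtain ⟨C, hC⟩ := ((isCompact_closedBall t 1).prod (isCompact_uIcc (a := a) (b := b))
    ).exists_bound_of_continuousOn hF'.continuousOn
  refine (intervalIntegral.hasDerivAt_integral_of_dominated_loc_of_deriv_le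
    (bound := fun _ => C) (Metric.ball_mem_nhds t one_pos)
    (Eventually.of_forall fun s => (hF.continuous.uncurry_left s).aestronglyMeasurable)
    ((hF.continuous.uncurry_left t).intervalIntegrable a b)
    (hF'.uncurry_left t).aestronglyMeasurable ?_ intervalIntegrable_const ?_).2
  · exact Eventually.of_forall fun x hx s hs =>
      hC (s, x) ⟨Metric.ball_subset_closedBall hs, uIoc_subset_uIcc hx⟩
  · exact Eventually.of_forall fun x _ s _ => hasDerivAt_dt (hF.differentiable one_ne_zero _)

theorem hasDerivAt_integral_zero_of_dt_eq_dx {e p : ℝ → ℝ → ℝ} {t a b : ℝ} (hab : a ≤ b)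
    (he : ContDiff ℝ 1 (uncurry e)) (hp : ContDiff ℝ 1 (uncurry p))
    (hcons : ∀ x, dt e t x = dx p t x) (he_supp : ∀ᶠ s in 𝓝 t, ∀ x ∉ Ioo a b, e s x = 0)
    (hpa : p t a = 0) (hpb : p t b = 0) :
    HasDerivAt (fun s => ∫ x, e s x) 0 t := by
  have hlocal : (fun s => ∫ x in a..b, e s x) =ᶠ[𝓝 t] fun s => ∫ x, e s x := by
    filter_upwards [he_supp] with s hs
    rw [intervalIntegral.integral_of_le hab]
    exact setIntegral_eq_integral_of_forall_compl_eq_zero fun x hx =>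
      hs x fun h => hx (Ioo_subset_Ioc_self h)
  have hflux : ∫ x in a..b, dt e t x = 0 := by
    simp_rw [hcons]
    rw [intervalIntegral.integral_eq_sub_of_hasDerivAt
      (fun x _ => hasDerivAt_dx (hp.differentiable one_ne_zero _))
      (((hp.uncurry_dx (m := 0) le_rfl).continuous.uncurry_left t).intervalIntegrable a b),
      hpa, hpb, sub_zero]
  exact hflux ▸ (hasDerivAt_intervalIntegral_of_contDiff he a b t).congr_of_eventuallyEq hlocal.symm

noncomputable def momDensity (Λ φ : ℝ → ℝ → ℝ) : ℝ → ℝ → ℝ :=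
  fun t x => dt Λ t x * dx Λ t x + 4 * Real.sinh (Λ t x) ^ 2 * (dt φ t x * dx φ t x)

section PCF

variable {Λ φ : ℝ → ℝ → ℝ}

theorem contDiff_uncurry_enDensity (hΛ : ContDiff ℝ 2 (uncurry Λ))
    (hφ : ContDiff ℝ 2 (uncurry φ)) : ContDiff ℝ 1 (uncurry (enDensity Λ φ)) := by
  have hΛt := hΛ.uncurry_dt (m := 1) le_rfl
  have hΛx := hΛ.uncurry_dx (m := 1) le_rfl
  have hφt := hφ.uncurry_dt (m := 1) le_rfl
  have hφx := hφ.uncurry_dx (m := 1) le_rfl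
  exact (contDiff_const.mul ((hΛt.pow 2).add (hΛx.pow 2))).add
    ((contDiff_const.mul ((Real.contDiff_sinh.comp (hΛ.of_le one_le_two)).pow 2)).mul
      ((hφt.pow 2).add (hφx.pow 2)))

theorem contDiff_uncurry_momDensity (hΛ : ContDiff ℝ 2 (uncurry Λ))
    (hφ : ContDiff ℝ 2 (uncurry φ)) : ContDiff ℝ 1 (uncurry (momDensity Λ φ)) := by
  have hΛt := hΛ.uncurry_dt (m := 1) le_rfl
  have hΛx := hΛ.uncurry_dx (m := 1) le_rfl
  have hφt := hφ.uncurry_dt (m := 1) le_rfl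
  have hφx := hφ.uncurry_dx (m := 1) le_rfl
  exact (hΛt.mul hΛx).add
    ((contDiff_const.mul ((Real.contDiff_sinh.comp (hΛ.of_le one_le_two)).pow 2)).mul
      (hφt.mul hφx))

theorem dt_enDensity_eq_dx_momDensity (hΛ : ContDiff ℝ 2 (uncurry Λ))
    (hφ : ContDiff ℝ 2 (uncurry φ)) {t x : ℝ}
    (heq1 : dt (dt Λ) t x - dx (dx Λ) t x
      = -2 * Real.sinh (2 * Λ t x) * ((dx φ t x) ^ 2 - (dt φ t x) ^ 2))
    (heq2 : dt (fun t x => (Real.sinh (Λ t x)) ^ 2 * dt φ t x) t x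
      = dx (fun t x => (Real.sinh (Λ t x)) ^ 2 * dx φ t x) t x) :
    dt (enDensity Λ φ) t x = dx (momDensity Λ φ) t x := by
  have hΛ' := hΛ.differentiable two_ne_zero (t, x)
  have hφ' := hφ.differentiable two_ne_zero (t, x)
  have hΛt := (hΛ.uncurry_dt (m := 1) le_rfl).differentiable one_ne_zero (t, x)
  have hΛx := (hΛ.uncurry_dx (m := 1) le_rfl).differentiable one_ne_zero (t, x)
  have hφt := (hφ.uncurry_dt (m := 1) le_rfl).differentiable one_ne_zero (t, x)
  have hφx := (hφ.uncurry_dx (m := 1) le_rfl).differentiable one_ne_zero (t, x)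
  have hE : dt (enDensity Λ φ) t x = _ :=
    (((((hasDerivAt_dt hΛt).pow 2).add ((hasDerivAt_dt hΛx).pow 2)).const_mul (1 / 2)).add
      ((((hasDerivAt_dt hΛ').sinh.pow 2).const_mul 2).mul
        (((hasDerivAt_dt hφt).pow 2).add ((hasDerivAt_dt hφx).pow 2)))).deriv
  have hP : dx (momDensity Λ φ) t x = _ :=
    (((hasDerivAt_dx hΛt).mul (hasDerivAt_dx hΛx)).add
      ((((hasDerivAt_dx hΛ').sinh.pow 2).const_mul 4).mul
        ((hasDerivAt_dx hφt).mul (hasDerivAt_dx hφx)))).deriv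
  have hL : dt (fun t x => Real.sinh (Λ t x) ^ 2 * dt φ t x) t x = _ :=
    (((hasDerivAt_dt hΛ').sinh.pow 2).mul (hasDerivAt_dt hφt)).deriv
  have hR : dx (fun t x => Real.sinh (Λ t x) ^ 2 * dx φ t x) t x = _ :=
    (((hasDerivAt_dx hΛ').sinh.pow 2).mul (hasDerivAt_dx hφx)).deriv
  rw [hL, hR] at heq2
  rw [Real.sinh_two_mul] at heq1
  rw [hE, hP, dx_dt_eq_dt_dx hΛ, dx_dt_eq_dt_dx hφ]
  simp only [Pi.add_apply, Pi.mul_apply, Pi.pow_apply] at heq2 ⊢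
  linear_combination dt Λ t x * heq1 + 4 * dt φ t x * heq2

end PCF

theorem stmt_5 (Λ φ : ℝ → ℝ → ℝ)
    (hΛ : ContDiff ℝ 2 (Function.uncurry Λ)) (hφ : ContDiff ℝ 2 (Function.uncurry φ))
    (heq1 : ∀ t x, dt (dt Λ) t x - dx (dx Λ) t x
      = -2 * Real.sinh (2 * Λ t x) * ((dx φ t x) ^ 2 - (dt φ t x) ^ 2))
    (heq2 : ∀ t x, dt (fun t x => (Real.sinh (Λ t x)) ^ 2 * dt φ t x) t x
      = dx (fun t x => (Real.sinh (Λ t x)) ^ 2 * dx φ t x) t x)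
    (hsupp : ∀ T > 0, ∃ R > 0, ∀ t x : ℝ, |t| ≤ T → R ≤ |x| →
      dt Λ t x = 0 ∧ dx Λ t x = 0 ∧ dt φ t x = 0 ∧ dx φ t x = 0) :
    ∀ t : ℝ, deriv (fun s => ∫ x : ℝ, enDensity Λ φ s x) t = 0 := by
  intro t
  obtain ⟨R, hR, hvanish⟩ := hsupp (|t| + 1) (by positivity)
  have hfar : ∀ s x, |s| ≤ |t| + 1 → R ≤ |x| →
      enDensity Λ φ s x = 0 ∧ momDensity Λ φ s x = 0 := by
    intro s x hs hx
    obtain ⟨h₁, h₂, h₃, h₄⟩ := hvanish s x hs hx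
    simp [enDensity, momDensity, h₁, h₂, h₃, h₄]
  have he_supp : ∀ᶠ s in 𝓝 t, ∀ x ∉ Ioo (-R) R, enDensity Λ φ s x = 0 := by
    filter_upwards [(continuous_abs.tendsto t).eventually (gt_mem_nhds (lt_add_one |t|))]
      with s hs x hx
    exact (hfar s x hs.le (le_of_not_gt fun h => hx (abs_lt.mp h))).1
  refine (hasDerivAt_integral_zero_of_dt_eq_dx (neg_le_self hR.le)
    (contDiff_uncurry_enDensity hΛ hφ) (contDiff_uncurry_momDensity hΛ hφ)
    (fun x => dt_enDensity_eq_dx_momDensity hΛ hφ (heq1 t x) (heq2 t x)) he_supp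
    (hfar t (-R) ?_ ?_).2 (hfar t R ?_ ?_).2).deriv
  all_goals simp [abs_of_pos hR]
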